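/- Let Ω, Ω₁, Ω₂ be sets and suppose there are maps h₁ : P(Ω₁) → P(Ω), h₂ : P(Ω₂) → P(Ω) preserving arbitrary unions and arbitrary intersections with h₁(Ω₁) = h₂(Ω₂) = Ω, such that for all singletons {x₁} ⊆ Ω₁ and {x₂} ⊆ Ω₂, the set h₁({x₁}) ∩ h₂({x₂}) is a singleton. Then the map sending (x₁, x₂) to the unique element of h₁({x₁}) ∩ h₂({x₂}) is a bijection from Ω₁ × Ω₂ to Ω, and consequently P(Ω) is isomorphic as a complete Boolean algebra to P(Ω₁ × Ω₂). -/
import Mathlib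


theorem stmt_12 (Ω Ω₁ Ω₂ : Type*)
    (h₁ : Set Ω₁ → Set Ω) (h₂ : Set Ω₂ → Set Ω)
    (h₁union : ∀ S : Set (Set Ω₁), h₁ (⋃₀ S) = ⋃₀ (h₁ '' S))
    (h₂union : ∀ S : Set (Set Ω₂), h₂ (⋃₀ S) = ⋃₀ (h₂ '' S))
    (h₁inter : ∀ S : Set (Set Ω₁), h₁ (⋂₀ S) = ⋂₀ (h₁ '' S))
    (h₂inter : ∀ S : Set (Set Ω₂), h₂ (⋂₀ S) = ⋂₀ (h₂ '' S))
    (h₁top : h₁ Set.univ = Set.univ) (h₂top : h₂ Set.univ = Set.univ)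
    (hatom : ∀ (x₁ : Ω₁) (x₂ : Ω₂), ∃ z : Ω, h₁ {x₁} ∩ h₂ {x₂} = {z}) :
    (∃ g : Ω₁ × Ω₂ → Ω, Function.Bijective g ∧
      ∀ (x₁ : Ω₁) (x₂ : Ω₂), h₁ {x₁} ∩ h₂ {x₂} = {g (x₁, x₂)}) ∧
    Nonempty (Set Ω ≃o Set (Ω₁ × Ω₂)) := by
  choose g hg using hatom
  -- binary intersection preservation
  have h₁bin : ∀ a b : Set Ω₁, h₁ (a ∩ b) = h₁ a ∩ h₁ b := by
    intro a b
    have := h₁inter {a, b}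
    simpa [Set.sInter_pair, Set.image_pair] using this
  have h₂bin : ∀ a b : Set Ω₂, h₂ (a ∩ b) = h₂ a ∩ h₂ b := by
    intro a b
    have := h₂inter {a, b}
    simpa [Set.sInter_pair, Set.image_pair] using this
  have h₁empty : h₁ ∅ = ∅ := by
    have := h₁union ∅
    simpa using this
  have h₂empty : h₂ ∅ = ∅ := by
    have := h₂union ∅
    simpa using this
  -- surjectivity : every ω lies in some h₁ {x₁}
  have cover₁ : ∀ ω : Ω, ∃ x₁ : Ω₁, ω ∈ h₁ {x₁} := by
    intro ω
    have huniv : (Set.univ : Set Ω₁) = ⋃₀ ((fun x => ({x} : Set Ω₁)) '' Set.univ) := by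
      ext x; simp
    have : ω ∈ h₁ (⋃₀ ((fun x => ({x} : Set Ω₁)) '' Set.univ)) := by
      rw [← huniv, h₁top]; trivial
    rw [h₁union] at this
    rcases this with ⟨t, ht, hωt⟩
    rcases ht with ⟨s, hs, rfl⟩
    rcases hs with ⟨x, -, rfl⟩
    exact ⟨x, hωt⟩
  have cover₂ : ∀ ω : Ω, ∃ x₂ : Ω₂, ω ∈ h₂ {x₂} := by
    intro ω
    have huniv : (Set.univ : Set Ω₂) = ⋃₀ ((fun x => ({x} : Set Ω₂)) '' Set.univ) := by
      ext x; simp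
    have : ω ∈ h₂ (⋃₀ ((fun x => ({x} : Set Ω₂)) '' Set.univ)) := by
      rw [← huniv, h₂top]; trivial
    rw [h₂union] at this
    rcases this with ⟨t, ht, hωt⟩
    rcases ht with ⟨s, hs, rfl⟩
    rcases hs with ⟨x, -, rfl⟩
    exact ⟨x, hωt⟩
  have hgmem : ∀ x₁ x₂, g x₁ x₂ ∈ h₁ {x₁} ∩ h₂ {x₂} := by
    intro x₁ x₂; rw [hg]; rfl
  have hbij : Function.Bijective (fun p : Ω₁ × Ω₂ => g p.1 p.2) := by
    constructor
    · rintro ⟨a₁, a₂⟩ ⟨b₁, b₂⟩ heq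
      simp only at heq
      have ha := hgmem a₁ a₂
      have hb := hgmem b₁ b₂
      rw [heq] at ha
      have e1 : a₁ = b₁ := by
        by_contra hne
        have : g b₁ b₂ ∈ h₁ ({a₁} ∩ {b₁}) := by
          rw [h₁bin]; exact ⟨ha.1, hb.1⟩
        rw [Set.singleton_inter_eq_empty.mpr (by simpa using hne), h₁empty] at this
        exact this
      have e2 : a₂ = b₂ := by
        by_contra hne
        have : g b₁ b₂ ∈ h₂ ({a₂} ∩ {b₂}) := by
          rw [h₂bin]; exact ⟨ha.2, hb.2⟩
        rw [Set.singleton_inter_eq_empty.mpr (by simpa using hne), h₂empty] at this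
        exact this
      simp [e1, e2]
    · intro ω
      obtain ⟨x₁, hx₁⟩ := cover₁ ω
      obtain ⟨x₂, hx₂⟩ := cover₂ ω
      have : ω ∈ h₁ {x₁} ∩ h₂ {x₂} := ⟨hx₁, hx₂⟩
      rw [hg] at this
      exact ⟨(x₁, x₂), this.symm⟩
  refine ⟨⟨fun p => g p.1 p.2, hbij, fun x₁ x₂ => hg x₁ x₂⟩, ?_⟩
  let e : Ω₁ × Ω₂ ≃ Ω := Equiv.ofBijective _ hbij
  exact ⟨{ toFun := fun s => e.symm '' s
           invFun := fun s => e '' s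
           left_inv := fun s => by simp [Set.image_image]
           right_inv := fun s => by simp [Set.image_image]
           map_rel_iff' := fun {a b} => Set.image_subset_image_iff e.symm.injective }⟩
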